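/- arXiv:2310.01697 — 4 statements merged into one kernel-verified Lean document; each statement's English description precedes it below -/
import Mathlib

section
/- Let E be a complete separable metric space, μ a fully supported Borel probability measure on E, and X = E^ℕ the product space with the metric d(x,y) = Σ_{n=1}^∞ 2^{-n} min(d_E(x_n,y_n),1). For a ∈ E and x ∈ X write a·x = (a, x_1, x_2, …). Let f : X → ℝ be bounded continuous and let the Ruelle transfer operator be L_f φ(x) = ∫_E e^{f(a·x)} φ(a·x) dμ(a). Then every conformal measure of L_f is fully supported: if ν is a Borel probability measure on X and ϱ > 0 satisfy ∫_X L_f φ dν = ϱ ∫_X φ dν for every bounded measurable φ, then ν(U) > 0 for every nonempty open set U ⊆ X. -/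
/-!
If `φ` is the indicator of a cylinder `[V₀ V₁ … Vₙ]`, then `L_f φ ≥ e^{-M} μ(V₀)` on the shifted
cylinder `[V₁ … Vₙ]`, where `M` bounds `|f|`. Integrating against `ν` and using conformality gives
`e^{-M} μ(V₀) ν[V₁ … Vₙ] ≤ ϱ ν[V₀ … Vₙ]`, so by induction on the length every cylinder over sets
of positive `μ`-measure has positive `ν`-measure. Every nonempty open set contains such a cylinder
over open sets, and these have positive `μ`-measure because `μ` is fully supported.
-/

open MeasureTheory

def consSeq {E : Type*} (a : E) (x : ℕ → E) : ℕ → E :=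
  fun n => match n with
  | 0 => a
  | k + 1 => x k

open Set

lemma abs_indicator_one_le {α : Type*} (S : Set α) (x : α) :
    |S.indicator (1 : α → ℝ) x| ≤ 1 := by
  by_cases hx : x ∈ S <;> simp [hx]

section TransferOperator

variable {E : Type*}

lemma consSeq_mem_pi_Iio_succ {V : ℕ → Set E} {n : ℕ} {a : E} {x : ℕ → E} :
    consSeq a x ∈ (Iio (n + 1)).pi V ↔ a ∈ V 0 ∧ x ∈ (Iio n).pi fun i => V (i + 1) := by
  simp only [mem_pi, mem_Iio]
  constructor
  · intro h
    exact ⟨h 0 n.succ_pos, fun i hi => h (i + 1) (by omega)⟩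
  · rintro ⟨h0, h⟩ (_ | i) hi
    · exact h0
    · exact h i (by omega)

variable {f φ : (ℕ → E) → ℝ} {M C : ℝ}

lemma norm_transferOp_integrand_le (hfM : ∀ x, |f x| ≤ M) (hφC : ∀ x, |φ x| ≤ C)
    (x : ℕ → E) (a : E) :
    ‖Real.exp (f (consSeq a x)) * φ (consSeq a x)‖ ≤ Real.exp M * C := by
  simp only [norm_mul, Real.norm_eq_abs, Real.abs_exp]
  exact mul_le_mul (Real.exp_le_exp.2 (abs_le.1 (hfM _)).2) (hφC _) (abs_nonneg _)
    (Real.exp_pos _).le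

variable [MeasurableSpace E]

lemma measurable_consSeq : Measurable fun p : E × (ℕ → E) => consSeq p.1 p.2 := by
  refine measurable_pi_lambda _ fun n => ?_
  cases n with
  | zero => exact measurable_fst
  | succ k => exact (measurable_pi_apply k).comp measurable_snd

noncomputable def transferOp (μ : Measure E) (f φ : (ℕ → E) → ℝ) (x : ℕ → E) : ℝ :=
  ∫ a, Real.exp (f (consSeq a x)) * φ (consSeq a x) ∂μ

def IsConformalMeasure (μ : Measure E) (f : (ℕ → E) → ℝ) (ν : Measure (ℕ → E)) (ϱ : ℝ) :
    Prop :=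
  ∀ φ : (ℕ → E) → ℝ, Measurable φ → (∃ C, ∀ x, |φ x| ≤ C) →
    ∫ x, transferOp μ f φ x ∂ν = ϱ * ∫ x, φ x ∂ν

variable {μ : Measure E}

lemma stronglyMeasurable_transferOp [SFinite μ] (hf : Measurable f) (hφ : Measurable φ) :
    StronglyMeasurable (transferOp μ f φ) := by
  have h : Measurable fun p : (ℕ → E) × E => consSeq p.2 p.1 :=
    measurable_consSeq.comp measurable_swap
  exact (((hf.comp h).exp).mul (hφ.comp h)).stronglyMeasurable.integral_prod_right'

lemma integrable_transferOp_integrand [IsFiniteMeasure μ] (hf : Measurable f)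
    (hφ : Measurable φ) (hfM : ∀ x, |f x| ≤ M) (hφC : ∀ x, |φ x| ≤ C) (x : ℕ → E) :
    Integrable (fun a => Real.exp (f (consSeq a x)) * φ (consSeq a x)) μ := by
  have h : Measurable fun a : E => consSeq a x :=
    measurable_consSeq.comp (measurable_id.prodMk measurable_const)
  exact .of_bound (((hf.comp h).exp).mul (hφ.comp h)).aestronglyMeasurable _
    (ae_of_all _ (norm_transferOp_integrand_le hfM hφC x))

lemma integrable_transferOp [IsFiniteMeasure μ] {ν : Measure (ℕ → E)} [IsFiniteMeasure ν]
    (hf : Measurable f) (hφ : Measurable φ) (hfM : ∀ x, |f x| ≤ M) (hφC : ∀ x, |φ x| ≤ C) :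
    Integrable (transferOp μ f φ) ν :=
  .of_bound (stronglyMeasurable_transferOp hf hφ).aestronglyMeasurable _ (ae_of_all _ fun x =>
    norm_integral_le_of_norm_le_const (ae_of_all μ (norm_transferOp_integrand_le hfM hφC x)))

lemma transferOp_nonneg (hφ : 0 ≤ φ) (x : ℕ → E) : 0 ≤ transferOp μ f φ x :=
  integral_nonneg fun _ => mul_nonneg (Real.exp_pos _).le (hφ _)

lemma le_transferOp_indicator [IsFiniteMeasure μ] (hf : Measurable f) (hfM : ∀ x, |f x| ≤ M)
    {S : Set (ℕ → E)} {B : Set E} (hS : MeasurableSet S) (hB : MeasurableSet B) {x : ℕ → E}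
    (hx : ∀ a ∈ B, consSeq a x ∈ S) :
    Real.exp (-M) * μ.real B ≤ transferOp μ f (S.indicator 1) x := by
  calc Real.exp (-M) * μ.real B = ∫ a, B.indicator (fun _ => Real.exp (-M)) a ∂μ := by
        rw [integral_indicator_const _ hB, smul_eq_mul, mul_comm]
    _ ≤ transferOp μ f (S.indicator 1) x := by
        refine integral_mono ((integrable_const _).indicator hB)
          (integrable_transferOp_integrand hf (measurable_const.indicator hS) hfM
            (abs_indicator_one_le S) x)
          fun a => ?_
        by_cases ha : a ∈ B
        · simpa [ha, hx a ha] using (abs_le.1 (hfM _)).1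
        · simp only [indicator_of_notMem ha]
          exact mul_nonneg (Real.exp_pos _).le (indicator_nonneg (fun _ _ => zero_le_one) _)

lemma IsConformalMeasure.mul_measureReal_le [IsFiniteMeasure μ] {ν : Measure (ℕ → E)}
    [IsFiniteMeasure ν] {ϱ : ℝ} (hconf : IsConformalMeasure μ f ν ϱ) (hf : Measurable f)
    (hfM : ∀ x, |f x| ≤ M) {S T : Set (ℕ → E)} {B : Set E} (hS : MeasurableSet S)
    (hT : MeasurableSet T) (hB : MeasurableSet B) (hTS : ∀ x ∈ T, ∀ a ∈ B, consSeq a x ∈ S) :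
    Real.exp (-M) * μ.real B * ν.real T ≤ ϱ * ν.real S := by
  have hφ : Measurable (S.indicator (1 : (ℕ → E) → ℝ)) := measurable_const.indicator hS
  calc Real.exp (-M) * μ.real B * ν.real T
        = ∫ x, T.indicator (fun _ => Real.exp (-M) * μ.real B) x ∂ν := by
        rw [integral_indicator_const _ hT, smul_eq_mul, mul_comm]
    _ ≤ ∫ x, transferOp μ f (S.indicator 1) x ∂ν := by
        refine integral_mono ((integrable_const _).indicator hT)
          (integrable_transferOp hf hφ hfM (abs_indicator_one_le S)) fun x => ?_
        by_cases hx : x ∈ T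
        · rw [indicator_of_mem hx]
          exact le_transferOp_indicator hf hfM hS hB (hTS x hx)
        · rw [indicator_of_notMem hx]
          exact transferOp_nonneg (indicator_nonneg fun _ _ => zero_le_one) x
    _ = ϱ * ν.real S := by
        rw [hconf _ hφ ⟨1, abs_indicator_one_le S⟩, integral_indicator_one hS]

lemma IsConformalMeasure.measure_pi_Iio_pos [IsFiniteMeasure μ] {ν : Measure (ℕ → E)}
    [IsProbabilityMeasure ν] {ϱ : ℝ} (hconf : IsConformalMeasure μ f ν ϱ) (hf : Measurable f)
    (hfM : ∀ x, |f x| ≤ M) {V : ℕ → Set E} (hV : ∀ i, MeasurableSet (V i))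
    (hμV : ∀ i, 0 < μ (V i)) (n : ℕ) : 0 < ν ((Iio n).pi V) := by
  induction n generalizing V with
  | zero => simp
  | succ n ih =>
    have hle := hconf.mul_measureReal_le hf hfM (S := (Iio (n + 1)).pi V)
      (T := (Iio n).pi fun i => V (i + 1)) (.pi (to_countable _) fun i _ => hV i)
      (.pi (to_countable _) fun i _ => hV (i + 1)) (hV 0)
      fun x hx a ha => consSeq_mem_pi_Iio_succ.2 ⟨ha, hx⟩
    have hμV0 : 0 < μ.real (V 0) := ENNReal.toReal_pos (hμV 0).ne' (measure_ne_top _ _)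
    have hνT : 0 < ν.real ((Iio n).pi fun i => V (i + 1)) :=
      ENNReal.toReal_pos (ih (fun i => hV (i + 1)) (fun i => hμV (i + 1))).ne'
        (measure_ne_top _ _)
    have hνS : 0 < ν.real ((Iio (n + 1)).pi V) := by
      refine measureReal_nonneg.lt_of_ne fun h => ?_
      rw [← h, mul_zero] at hle
      exact hle.not_gt (mul_pos (mul_pos (Real.exp_pos _) hμV0) hνT)
    exact (ENNReal.toReal_pos_iff.1 hνS).1

end TransferOperator

lemma exists_pi_Iio_subset_of_isOpen {X : Type*} [TopologicalSpace X] {U : Set (ℕ → X)}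
    (hU : IsOpen U) {x : ℕ → X} (hx : x ∈ U) :
    ∃ (n : ℕ) (V : ℕ → Set X), (∀ i, IsOpen (V i) ∧ x i ∈ V i) ∧ (Iio n).pi V ⊆ U := by
  classical
  obtain ⟨I, u, hIu, hIuU⟩ := isOpen_pi_iff.1 hU x hx
  refine ⟨I.sup id + 1, I.piecewise u fun _ => univ, fun i => ?_, fun y hy => hIuU fun i hi => ?_⟩
  · by_cases hi : i ∈ I
    · simpa [hi] using hIu i hi
    · simp [hi]
  · have hin : i < I.sup id + 1 := Nat.lt_succ_of_le (I.le_sup (f := id) hi)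
    simpa only [Finset.piecewise_eq_of_mem _ _ _ hi] using hy i hin

theorem stmt_2_general
    {E : Type*} [MetricSpace E]
    [TopologicalSpace.SeparableSpace E]
    [MeasurableSpace E] [BorelSpace E]
    (μ : Measure E) [IsProbabilityMeasure μ]
    (hμfull : ∀ V : Set E, IsOpen V → V.Nonempty → 0 < μ V)
    (f : (ℕ → E) → ℝ) (hfc : Continuous f) (hfb : ∃ M, ∀ x, |f x| ≤ M)
    (L : ((ℕ → E) → ℝ) → ((ℕ → E) → ℝ))
    (hL : ∀ φ x, L φ x = ∫ a, Real.exp (f (consSeq a x)) * φ (consSeq a x) ∂μ)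
    (ν : Measure (ℕ → E)) [IsProbabilityMeasure ν]
    (ϱ : ℝ)
    (hconf : ∀ φ : (ℕ → E) → ℝ, Measurable φ → (∃ M, ∀ x, |φ x| ≤ M) →
      ∫ x, L φ x ∂ν = ϱ * ∫ x, φ x ∂ν) :
    ∀ U : Set (ℕ → E), IsOpen U → U.Nonempty → 0 < ν U := by
  obtain rfl : L = transferOp μ f := funext fun φ => funext (hL φ)
  obtain ⟨M, hM⟩ := hfb
  rintro U hU ⟨x, hx⟩
  obtain ⟨n, V, hV, hVU⟩ := exists_pi_Iio_subset_of_isOpen hU hx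
  have hcyl := IsConformalMeasure.measure_pi_Iio_pos hconf hfc.measurable hM
    (fun i => (hV i).1.measurableSet) (fun i => hμfull _ (hV i).1 ⟨x i, (hV i).2⟩) n
  exact hcyl.trans_le (measure_mono hVU)

/-- Every conformal measure of the standard Ruelle operator with a fully
supported a priori measure is fully supported. -/
theorem stmt_2
    {E : Type*} [MetricSpace E] [CompleteSpace E]
    [TopologicalSpace.SeparableSpace E]
    [MeasurableSpace E] [BorelSpace E]
    (μ : Measure E) [IsProbabilityMeasure μ]
    (hμfull : ∀ V : Set E, IsOpen V → V.Nonempty → 0 < μ V)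
    (f : (ℕ → E) → ℝ) (hfc : Continuous f) (hfb : ∃ M, ∀ x, |f x| ≤ M)
    (L : ((ℕ → E) → ℝ) → ((ℕ → E) → ℝ))
    (hL : ∀ φ x, L φ x = ∫ a, Real.exp (f (consSeq a x)) * φ (consSeq a x) ∂μ)
    (ν : Measure (ℕ → E)) [IsProbabilityMeasure ν]
    (ϱ : ℝ) (hϱ : 0 < ϱ)
    (hconf : ∀ φ : (ℕ → E) → ℝ, Measurable φ → (∃ M, ∀ x, |φ x| ≤ M) →
      ∫ x, L φ x ∂ν = ϱ * ∫ x, φ x ∂ν) :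
    ∀ U : Set (ℕ → E), IsOpen U → U.Nonempty → 0 < ν U :=
  stmt_2_general μ hμfull f hfc hfb L hL ν ϱ hconf
end

section
/- Let X be a complete separable metric space, κ a Markov transition probability kernel on X with the Feller property (for every bounded continuous φ, the function Pφ(x) = ∫_X φ(y) dκ(x)(y) is bounded continuous), and let μ be a Borel probability measure on X. Let ℙ_μ be the law on the path space X^ℕ of the Markov chain (Φ_n)_{n≥0} with initial distribution μ and transition kernel κ (the coordinate process under the Ionescu–Tulcea measure). Then for every bounded continuous φ : X → ℝ, ℙ_μ-almost surely (1/n) Σ_{k=0}^{n-1} (Pφ(Φ_k) − φ(Φ_k)) → 0 as n → ∞. -/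
/-!
The increments `d k = φ(Φ_{k+1}) − Pφ(Φ_k)` are bounded martingale differences, so by the Markov
property they are pairwise orthogonal in `L²(ℙ)` and `E[(∑_{k<n} d k)²] ≤ n C²`. Chebyshev and
Borel–Cantelli along the squares `n = r²` (where `∑ 1/r²` converges) give `(1/n) ∑_{k<n} d k → 0`
a.s. along squares, and boundedness of the `d k` fills the gaps between consecutive squares.
Finally `∑_{k<n} (Pφ(Φ_k) − φ(Φ_k))` differs from `−∑_{k<n} d k` by the telescoping sum
`φ(Φ_n) − φ(Φ_0)`, which is bounded.
-/

open MeasureTheory Filter Topology Finset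

lemma abs_sum_range_sub_sum_range_le {d : ℕ → ℝ} {C : ℝ} (hbd : ∀ k, |d k| ≤ C) {m n : ℕ}
    (hmn : m ≤ n) : |∑ k ∈ range n, d k - ∑ k ∈ range m, d k| ≤ (n - m : ℕ) * C := by
  rw [← sum_Ico_eq_sub _ hmn]
  calc |∑ k ∈ Ico m n, d k| ≤ ∑ k ∈ Ico m n, |d k| := abs_sum_le_sum_abs _ _
    _ ≤ ∑ _k ∈ Ico m n, C := sum_le_sum fun k _ => hbd k
    _ = (n - m : ℕ) * C := by rw [sum_const, Nat.card_Ico, nsmul_eq_mul]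

lemma abs_sum_range_le {d : ℕ → ℝ} {C : ℝ} (hbd : ∀ k, |d k| ≤ C) (n : ℕ) :
    |∑ k ∈ range n, d k| ≤ n * C := by
  simpa using abs_sum_range_sub_sum_range_le hbd (Nat.zero_le n)

/-- Between `r²` and `m < (r + 1)²` there are at most `2r` terms, each bounded by `C`. -/
lemma tendsto_inv_mul_sum_range_of_tendsto_along_sq {d : ℕ → ℝ} {C : ℝ} (hbd : ∀ k, |d k| ≤ C)
    (h : Tendsto (fun r : ℕ => ((r : ℝ) ^ 2)⁻¹ * ∑ k ∈ range (r ^ 2), d k) atTop (𝓝 0)) :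
    Tendsto (fun n : ℕ => (n : ℝ)⁻¹ * ∑ k ∈ range n, d k) atTop (𝓝 0) := by
  have hsqrt : Tendsto Nat.sqrt atTop atTop :=
    tendsto_atTop_atTop.2 fun b => ⟨b * b, fun m hm => Nat.le_sqrt.2 hm⟩
  have hbound : Tendsto (fun m : ℕ => |((Nat.sqrt m : ℝ) ^ 2)⁻¹ * ∑ k ∈ range (Nat.sqrt m ^ 2), d k|
      + 2 * C / Nat.sqrt m) atTop (𝓝 0) := by
    have := (h.abs.add (tendsto_const_div_atTop_nhds_zero_nat (2 * C))).comp hsqrt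
    rwa [abs_zero, add_zero] at this
  rw [tendsto_zero_iff_abs_tendsto_zero]
  refine squeeze_zero' (Eventually.of_forall fun m => abs_nonneg _) ?_ hbound
  filter_upwards [eventually_ge_atTop 1] with m hm
  set r := Nat.sqrt m
  have hrm : r ^ 2 ≤ m := by simpa [pow_two] using Nat.sqrt_le m
  have hgap : m - r ^ 2 ≤ 2 * r := by
    have : m < (r + 1) * (r + 1) := Nat.lt_succ_sqrt m
    have : m ≤ r ^ 2 + 2 * r := by nlinarith
    omega
  have hrmR : (r : ℝ) ^ 2 ≤ m := by exact_mod_cast hrm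
  have hC : 0 ≤ C := (abs_nonneg _).trans (hbd 0)
  have hdiff : |∑ k ∈ range m, d k| ≤ |∑ k ∈ range (r ^ 2), d k| + 2 * r * C := by
    have h1 := abs_sum_range_sub_sum_range_le hbd hrm
    have h2 : ((m - r ^ 2 : ℕ) : ℝ) * C ≤ 2 * r * C :=
      mul_le_mul_of_nonneg_right (by exact_mod_cast hgap) hC
    have h3 := abs_sub_abs_le_abs_sub (∑ k ∈ range m, d k) (∑ k ∈ range (r ^ 2), d k)
    linarith
  calc |(m : ℝ)⁻¹ * ∑ k ∈ range m, d k| = |∑ k ∈ range m, d k| / m := by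
        rw [abs_mul, abs_inv, Nat.abs_cast, inv_mul_eq_div]
    _ ≤ (|∑ k ∈ range (r ^ 2), d k| + 2 * r * C) / (r : ℝ) ^ 2 :=
        div_le_div₀ ((abs_nonneg _).trans hdiff) hdiff (by positivity) hrmR
    _ = |((r : ℝ) ^ 2)⁻¹ * ∑ k ∈ range (r ^ 2), d k| + 2 * C / r := by
        rw [abs_mul, abs_inv, abs_of_pos (by positivity : (0 : ℝ) < r ^ 2)]
        field_simp

lemma tendsto_inv_mul_sum_range_sub_succ {a : ℕ → ℝ} {M : ℝ} (ha : ∀ k, |a k| ≤ M) :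
    Tendsto (fun n : ℕ => (n : ℝ)⁻¹ * ∑ k ∈ range n, (a (k + 1) - a k)) atTop (𝓝 0) := by
  refine squeeze_zero_norm (fun n => ?_) (tendsto_const_div_atTop_nhds_zero_nat (M + M))
  rw [sum_range_sub, Real.norm_eq_abs, abs_mul, abs_inv, Nat.abs_cast, ← div_eq_inv_mul]
  gcongr
  exact (abs_sub _ _).trans (add_le_add (ha n) (ha 0))

section Orthogonal

variable {Ω : Type*} [MeasurableSpace Ω] {ℙ : Measure Ω}

lemma integrable_of_abs_le [IsFiniteMeasure ℙ] {f : Ω → ℝ} (hf : Measurable f) {C : ℝ}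
    (hC : ∀ ω, |f ω| ≤ C) : Integrable f ℙ :=
  .of_bound hf.aestronglyMeasurable C (ae_of_all _ hC)

/-- Chebyshev and Borel–Cantelli in one step: `∑ₙ f n ^ 2` is integrable, hence a.s. finite. -/
lemma ae_tendsto_zero_of_summable_integral_sq {f : ℕ → Ω → ℝ} (hf : ∀ n, Measurable (f n))
    (hint : ∀ n, Integrable (fun ω => f n ω ^ 2) ℙ)
    (hsum : Summable fun n => ∫ ω, f n ω ^ 2 ∂ℙ) :
    ∀ᵐ ω ∂ℙ, Tendsto (fun n => f n ω) atTop (𝓝 0) := by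
  have hmeas (n : ℕ) : Measurable fun ω => ENNReal.ofReal (f n ω ^ 2) :=
    ((hf n).pow_const 2).ennreal_ofReal
  have hlint : ∫⁻ ω, ∑' n, ENNReal.ofReal (f n ω ^ 2) ∂ℙ ≠ ⊤ := by
    rw [lintegral_tsum fun n => (hmeas n).aemeasurable]
    simp_rw [← ofReal_integral_eq_lintegral_ofReal (hint _) (ae_of_all _ fun ω => sq_nonneg _)]
    rw [← ENNReal.ofReal_tsum_of_nonneg (fun n => integral_nonneg fun ω => sq_nonneg _) hsum]
    exact ENNReal.ofReal_ne_top
  filter_upwards [ae_lt_top (Measurable.tsum hmeas) hlint] with ω hω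
  have hsq : Tendsto (fun n => f n ω ^ 2) atTop (𝓝 0) := by
    refine (ENNReal.summable_toReal hω.ne).tendsto_atTop_zero.congr fun n => ?_
    exact ENNReal.toReal_ofReal (sq_nonneg _)
  have habs := (Real.continuous_sqrt.tendsto 0).comp hsq
  simp only [Function.comp_def, Real.sqrt_sq_eq_abs, Real.sqrt_zero] at habs
  exact tendsto_zero_iff_abs_tendsto_zero _ |>.2 habs

variable [IsProbabilityMeasure ℙ] {d : ℕ → Ω → ℝ} {C : ℝ}

lemma integral_sq_sum_range_le_of_pairwise_orthogonal (hd : ∀ k, Measurable (d k))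
    (hbd : ∀ k ω, |d k ω| ≤ C) (horth : Pairwise fun j k => ∫ ω, d j ω * d k ω ∂ℙ = 0)
    (n : ℕ) : ∫ ω, (∑ k ∈ range n, d k ω) ^ 2 ∂ℙ ≤ n * C ^ 2 := by
  have hint (j k : ℕ) : Integrable (fun ω => d j ω * d k ω) ℙ :=
    (integrable_of_abs_le (hd k) (hbd k)).bdd_mul (hd j).aestronglyMeasurable (ae_of_all _ (hbd j))
  have hdiag (j : ℕ) : ∫ ω, d j ω * d j ω ∂ℙ ≤ C ^ 2 := by
    refine (integral_mono (hint j j) (integrable_const (C ^ 2)) fun ω => ?_).trans (by simp)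
    rw [← pow_two, ← sq_abs]
    exact pow_le_pow_left₀ (abs_nonneg _) (hbd j ω) 2
  calc ∫ ω, (∑ k ∈ range n, d k ω) ^ 2 ∂ℙ
      = ∑ j ∈ range n, ∑ k ∈ range n, ∫ ω, d j ω * d k ω ∂ℙ := by
        simp_rw [sq, sum_mul_sum]
        rw [integral_finsetSum _ fun j _ => integrable_finsetSum _ fun k _ => hint j k]
        exact sum_congr rfl fun j _ => integral_finsetSum _ fun k _ => hint j k
    _ = ∑ j ∈ range n, ∫ ω, d j ω * d j ω ∂ℙ :=
        sum_congr rfl fun j hj => sum_eq_single j (fun k _ hkj => horth hkj.symm)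
          fun hj' => absurd hj hj'
    _ ≤ ∑ _j ∈ range n, C ^ 2 := sum_le_sum fun j _ => hdiag j
    _ = n * C ^ 2 := by rw [sum_const, card_range, nsmul_eq_mul]

lemma ae_tendsto_inv_mul_sum_range_sq_of_pairwise_orthogonal (hd : ∀ k, Measurable (d k))
    (hbd : ∀ k ω, |d k ω| ≤ C) (horth : Pairwise fun j k => ∫ ω, d j ω * d k ω ∂ℙ = 0) :
    ∀ᵐ ω ∂ℙ, Tendsto (fun r : ℕ => ((r : ℝ) ^ 2)⁻¹ * ∑ k ∈ range (r ^ 2), d k ω)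
      atTop (𝓝 0) := by
  set f : ℕ → Ω → ℝ := fun n ω => (((n + 1 : ℕ) : ℝ) ^ 2)⁻¹ * ∑ k ∈ range ((n + 1) ^ 2), d k ω
  have hS (N : ℕ) : Measurable fun ω => ∑ k ∈ range N, d k ω :=
    Finset.measurable_sum _ fun k _ => hd k
  have hS2 (N : ℕ) : Integrable (fun ω => (∑ k ∈ range N, d k ω) ^ 2) ℙ := by
    refine integrable_of_abs_le ((hS N).pow_const 2) (C := (N * C) ^ 2) fun ω => ?_
    rw [abs_pow]
    exact pow_le_pow_left₀ (abs_nonneg _) (abs_sum_range_le (fun k => hbd k ω) N) 2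
  have hf2 (n : ℕ) : (fun ω => f n ω ^ 2)
      = fun ω => ((((n + 1 : ℕ) : ℝ) ^ 2)⁻¹) ^ 2 * (∑ k ∈ range ((n + 1) ^ 2), d k ω) ^ 2 := by
    ext ω; exact mul_pow _ _ 2
  have hint (n : ℕ) : Integrable (fun ω => f n ω ^ 2) ℙ := hf2 n ▸ (hS2 _).const_mul _
  have hmoment (n : ℕ) : ∫ ω, f n ω ^ 2 ∂ℙ ≤ C ^ 2 * (((n + 1 : ℕ) : ℝ) ^ 2)⁻¹ := by
    rw [hf2, integral_const_mul]
    calc ((((n + 1 : ℕ) : ℝ) ^ 2)⁻¹) ^ 2 * ∫ ω, (∑ k ∈ range ((n + 1) ^ 2), d k ω) ^ 2 ∂ℙ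
        ≤ ((((n + 1 : ℕ) : ℝ) ^ 2)⁻¹) ^ 2 * (((n + 1) ^ 2 : ℕ) * C ^ 2) := by
          gcongr
          exact integral_sq_sum_range_le_of_pairwise_orthogonal hd hbd horth _
      _ = C ^ 2 * (((n + 1 : ℕ) : ℝ) ^ 2)⁻¹ := by
          push_cast
          field_simp
  have hsum : Summable fun n => ∫ ω, f n ω ^ 2 ∂ℙ := by
    refine .of_nonneg_of_le (fun n => integral_nonneg fun ω => sq_nonneg _) hmoment
      ((summable_nat_add_iff 1).2 (Real.summable_nat_pow_inv.2 one_lt_two) |>.mul_left _)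
  filter_upwards [ae_tendsto_zero_of_summable_integral_sq (fun n => (hS _).const_mul _) hint hsum]
    with ω hω
  exact (tendsto_add_atTop_iff_nat 1).1 hω

lemma ae_tendsto_inv_mul_sum_range_of_pairwise_orthogonal (hd : ∀ k, Measurable (d k))
    (hbd : ∀ k ω, |d k ω| ≤ C) (horth : Pairwise fun j k => ∫ ω, d j ω * d k ω ∂ℙ = 0) :
    ∀ᵐ ω ∂ℙ, Tendsto (fun n : ℕ => (n : ℝ)⁻¹ * ∑ k ∈ range n, d k ω) atTop (𝓝 0) := by
  filter_upwards [ae_tendsto_inv_mul_sum_range_sq_of_pairwise_orthogonal hd hbd horth] with ω hω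
  exact tendsto_inv_mul_sum_range_of_tendsto_along_sq (fun k => hbd k ω) hω

end Orthogonal

section Markov

variable {X : Type*} [MeasurableSpace X]

def MarkovProperty (κ : X → Measure X) (ℙ : Measure (ℕ → X)) : Prop :=
  ∀ n : ℕ, ∀ g : X → ℝ, Measurable g → (∃ M, ∀ x, |g x| ≤ M) →
    ∀ h : (Fin (n + 1) → X) → ℝ, Measurable h → (∃ M, ∀ v, |h v| ≤ M) →
      ∫ ω, h (fun i => ω i.1) * g (ω (n + 1)) ∂ℙ
        = ∫ ω, h (fun i => ω i.1) * (∫ y, g y ∂κ (ω n)) ∂ℙ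

namespace MarkovProperty

variable {κ : X → Measure X} {ℙ : Measure (ℕ → X)} [IsFiniteMeasure ℙ] {g : X → ℝ} {M M' : ℝ}

lemma integral_mul_increment_eq_zero (hℙ : MarkovProperty κ ℙ) (hg : Measurable g)
    (hgb : ∀ x, |g x| ≤ M) (hPg : Measurable fun x => ∫ y, g y ∂κ x)
    (hPgb : ∀ x, |∫ y, g y ∂κ x| ≤ M') {n : ℕ} {h : (Fin (n + 1) → X) → ℝ} (hh : Measurable h)
    {Mh : ℝ} (hhb : ∀ v, |h v| ≤ Mh) :
    ∫ ω, h (fun i => ω i.1) * (g (ω (n + 1)) - ∫ y, g y ∂κ (ω n)) ∂ℙ = 0 := by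
  have hH : Measurable fun ω : ℕ → X => h (fun i => ω i.1) :=
    hh.comp (measurable_pi_lambda _ fun i => measurable_pi_apply _)
  have hHint : Integrable (fun ω : ℕ → X => h (fun i => ω i.1)) ℙ :=
    integrable_of_abs_le hH fun ω => hhb _
  have hnext : Integrable (fun ω : ℕ → X => h (fun i => ω i.1) * g (ω (n + 1))) ℙ :=
    hHint.mul_bdd (hg.comp (measurable_pi_apply _)).aestronglyMeasurable
      (ae_of_all _ fun ω => hgb _)
  have hpred : Integrable (fun ω : ℕ → X => h (fun i => ω i.1) * ∫ y, g y ∂κ (ω n)) ℙ :=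
    hHint.mul_bdd (hPg.comp (measurable_pi_apply _)).aestronglyMeasurable
      (ae_of_all _ fun ω => hPgb _)
  simp_rw [mul_sub]
  rw [integral_sub hnext hpred]
  exact sub_eq_zero.2 (hℙ n g hg ⟨M, hgb⟩ h hh ⟨Mh, hhb⟩)

lemma integral_increment_mul_increment_eq_zero (hℙ : MarkovProperty κ ℙ) (hg : Measurable g)
    (hgb : ∀ x, |g x| ≤ M) (hPg : Measurable fun x => ∫ y, g y ∂κ x)
    (hPgb : ∀ x, |∫ y, g y ∂κ x| ≤ M') {j k : ℕ} (hjk : j < k) :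
    ∫ ω, (g (ω (j + 1)) - ∫ y, g y ∂κ (ω j)) * (g (ω (k + 1)) - ∫ y, g y ∂κ (ω k)) ∂ℙ = 0 :=
  hℙ.integral_mul_increment_eq_zero hg hgb hPg hPgb (n := k)
    (h := fun v => g (v ⟨j + 1, by omega⟩) - ∫ y, g y ∂κ (v ⟨j, by omega⟩))
    ((hg.comp (measurable_pi_apply _)).sub (hPg.comp (measurable_pi_apply _)))
    fun v => (abs_sub _ _).trans (add_le_add (hgb _) (hPgb _))

end MarkovProperty

end Markov

theorem stmt_7_general
    {X : Type*} [MetricSpace X]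
    [MeasurableSpace X] [BorelSpace X]
    (κ : X → Measure X)
    (hFeller : ∀ φ : X → ℝ, Continuous φ → (∃ M, ∀ x, |φ x| ≤ M) →
      Continuous (fun x => ∫ y, φ y ∂ κ x) ∧ ∃ M, ∀ x, |∫ y, φ y ∂ κ x| ≤ M)
    (ℙ : Measure (ℕ → X)) [IsProbabilityMeasure ℙ]
    (hMarkov : ∀ n : ℕ, ∀ g : X → ℝ, Measurable g → (∃ M, ∀ x, |g x| ≤ M) →
      ∀ h : (Fin (n + 1) → X) → ℝ, Measurable h → (∃ M, ∀ v, |h v| ≤ M) →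
      ∫ ω, h (fun i => ω i.1) * g (ω (n + 1)) ∂ℙ
        = ∫ ω, h (fun i => ω i.1) * (∫ y, g y ∂ κ (ω n)) ∂ℙ) :
    ∀ φ : X → ℝ, Continuous φ → (∃ M, ∀ x, |φ x| ≤ M) →
      ∀ᵐ ω ∂ℙ, Tendsto
        (fun n : ℕ => (n : ℝ)⁻¹ * ∑ k ∈ Finset.range n, ((∫ y, φ y ∂ κ (ω k)) - φ (ω k)))
        atTop (nhds 0) := by
  intro φ hφ ⟨M, hM⟩
  obtain ⟨hPφ, M', hM'⟩ := hFeller φ hφ ⟨M, hM⟩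
  have hℙ : MarkovProperty κ ℙ := hMarkov
  set d : ℕ → (ℕ → X) → ℝ := fun k ω => φ (ω (k + 1)) - ∫ y, φ y ∂κ (ω k)
  have hd : ∀ k, Measurable (d k) := fun k =>
    (hφ.measurable.comp (measurable_pi_apply _)).sub (hPφ.measurable.comp (measurable_pi_apply _))
  have hdb : ∀ k ω, |d k ω| ≤ M + M' := fun k ω => (abs_sub _ _).trans (add_le_add (hM _) (hM' _))
  have horth : Pairwise fun j k => ∫ ω, d j ω * d k ω ∂ℙ = 0 := by
    intro j k hjk
    rcases hjk.lt_or_gt with hlt | hgt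
    · exact hℙ.integral_increment_mul_increment_eq_zero hφ.measurable hM hPφ.measurable hM' hlt
    · simpa only [mul_comm] using
        hℙ.integral_increment_mul_increment_eq_zero hφ.measurable hM hPφ.measurable hM' hgt
  filter_upwards [ae_tendsto_inv_mul_sum_range_of_pairwise_orthogonal hd hdb horth] with ω hω
  have hlim := (tendsto_inv_mul_sum_range_sub_succ fun k => hM (ω k)).sub hω
  rw [sub_zero] at hlim
  refine hlim.congr fun n => ?_
  rw [← mul_sub, ← sum_sub_distrib]
  congr 1
  exact sum_congr rfl fun k _ => by ring

/-- Furstenberg's lemma: for a Feller Markov chain, the Cesàro averages of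
`Pφ(Φ_k) − φ(Φ_k)` go to zero almost surely. -/
theorem stmt_7
    {X : Type*} [MetricSpace X] [CompleteSpace X]
    [TopologicalSpace.SeparableSpace X]
    [MeasurableSpace X] [BorelSpace X]
    (κ : X → Measure X) (hκp : ∀ x, IsProbabilityMeasure (κ x))
    (hκm : ∀ A : Set X, MeasurableSet A → Measurable fun x => κ x A)
    (hFeller : ∀ φ : X → ℝ, Continuous φ → (∃ M, ∀ x, |φ x| ≤ M) →
      Continuous (fun x => ∫ y, φ y ∂ κ x) ∧ ∃ M, ∀ x, |∫ y, φ y ∂ κ x| ≤ M)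
    (μ : Measure X) [IsProbabilityMeasure μ]
    (ℙ : Measure (ℕ → X)) [IsProbabilityMeasure ℙ]
    (h0 : Measure.map (fun ω => ω 0) ℙ = μ)
    (hMarkov : ∀ n : ℕ, ∀ g : X → ℝ, Measurable g → (∃ M, ∀ x, |g x| ≤ M) →
      ∀ h : (Fin (n + 1) → X) → ℝ, Measurable h → (∃ M, ∀ v, |h v| ≤ M) →
      ∫ ω, h (fun i => ω i.1) * g (ω (n + 1)) ∂ℙ
        = ∫ ω, h (fun i => ω i.1) * (∫ y, g y ∂ κ (ω n)) ∂ℙ) :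
    ∀ φ : X → ℝ, Continuous φ → (∃ M, ∀ x, |φ x| ≤ M) →
      ∀ᵐ ω ∂ℙ, Tendsto
        (fun n : ℕ => (n : ℝ)⁻¹ * ∑ k ∈ Finset.range n, ((∫ y, φ y ∂ κ (ω k)) - φ (ω k)))
        atTop (nhds 0) :=
  stmt_7_general κ hFeller ℙ hMarkov
end

section
/- Let N ≥ 1, let E = S^N ⊂ ℝ^{N+1} be the unit Euclidean sphere, and let X = E^ℕ with metric d(x,y) = Σ_{n=1}^∞ 2^{-n} min(|x_n − y_n|, 1), where |·| is the Euclidean distance in ℝ^{N+1}. Fix δ > 0 and define the Dyson-type potential f(x) = Σ_{n=1}^∞ ⟨x_1, x_{n+1}⟩ / n^{2+δ}, where ⟨·,·⟩ is the Euclidean inner product. Then the series converges absolutely for every x ∈ X, f is bounded and continuous, and for every ε with 0 < ε ≤ 1 + δ and every r_0 > e there exists C > 0 such that |f(x) − f(y)| ≤ C (log(r_0/d(x,y)))^{-ε} for all x ≠ y in X; that is, f belongs to the generalized Hölder space C^{ε log}(X, ℝ). -/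
/-!
Each term `⟪x₀, xₙ₊₁⟫ / (n+1)^(2+δ)` is bounded by `(n+1)^(-(2+δ))` and, since the shift metric
controls the `n`-th coordinate up to a factor `2ⁿ⁺¹`, is `O(2ⁿ d)`-Lipschitz. For two points at
distance `d = r₀ e^(-L)` cut the series at `K = ⌈L/2⌉`: the first `K` differences contribute
`O(2^K d) = O(e^(-L/2))`, the tail contributes `O(K^(-(1+δ))) = O(L^(-(1+δ)))`, and both are
`O(L^(-ε))` for `ε ≤ 1 + δ` because `L ≥ 1`.
-/

open MeasureTheory
open scoped RealInnerProductSpace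

/-- The metric `d(x,y) = Σ_{n≥1} 2⁻ⁿ min(d_E(x_n,y_n),1)` on the shift space. -/
noncomputable def seqDist {E : Type*} [PseudoMetricSpace E] (x y : ℕ → E) : ℝ :=
  ∑' n : ℕ, (1 / 2 : ℝ) ^ (n + 1) * min (dist (x n) (y n)) 1

open Real Finset
open scoped Nat

section seqDist

variable {E : Type*} [PseudoMetricSpace E]

lemma summable_seqDist_term (x y : ℕ → E) :
    Summable fun n : ℕ => (1 / 2 : ℝ) ^ (n + 1) * min (dist (x n) (y n)) 1 :=
  Summable.of_nonneg_of_le (fun n => by positivity)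
    (fun n => mul_le_of_le_one_right (by positivity) (min_le_right _ _))
    ((summable_nat_add_iff 1).mpr summable_geometric_two)

lemma seqDist_nonneg (x y : ℕ → E) : 0 ≤ seqDist x y :=
  tsum_nonneg fun n => by positivity

lemma seqDist_le_one (x y : ℕ → E) : seqDist x y ≤ 1 :=
  calc seqDist x y ≤ ∑' n : ℕ, (1 / 2 : ℝ) ^ (n + 1) :=
        (summable_seqDist_term x y).tsum_le_tsum
          (fun n => mul_le_of_le_one_right (by positivity) (min_le_right _ _))
          ((summable_nat_add_iff 1).mpr summable_geometric_two)
    _ = 1 := by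
        simp_rw [pow_succ', tsum_mul_left, tsum_geometric_two]
        norm_num

lemma min_dist_le_two_pow_mul_seqDist (x y : ℕ → E) (n : ℕ) :
    min (dist (x n) (y n)) 1 ≤ 2 ^ (n + 1) * seqDist x y :=
  calc min (dist (x n) (y n)) 1
      = 2 ^ (n + 1) * ((1 / 2 : ℝ) ^ (n + 1) * min (dist (x n) (y n)) 1) := by
        rw [← mul_assoc, ← mul_pow]
        norm_num
    _ ≤ 2 ^ (n + 1) * seqDist x y := by
        gcongr
        exact (summable_seqDist_term x y).le_tsum n fun m _ => by positivity

lemma dist_le_mul_two_pow_mul_seqDist (x y : ℕ → E) {n : ℕ} {B : ℝ} (hB1 : 1 ≤ B)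
    (hB : dist (x n) (y n) ≤ B) : dist (x n) (y n) ≤ B * 2 ^ (n + 1) * seqDist x y := by
  have h := min_dist_le_two_pow_mul_seqDist x y n
  rcases le_total (dist (x n) (y n)) 1 with h1 | h1
  · rw [min_eq_left h1] at h
    nlinarith [dist_nonneg (x := x n) (y := y n)]
  · rw [min_eq_right h1] at h
    nlinarith

end seqDist

lemma seqDist_pos {E : Type*} [MetricSpace E] {x y : ℕ → E} (h : x ≠ y) :
    0 < seqDist x y := by
  obtain ⟨n, hn⟩ := Function.ne_iff.mp h
  exact (summable_seqDist_term x y).tsum_pos (fun m => by positivity) n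
    (mul_pos (by positivity) (lt_min (dist_pos.mpr hn) one_pos))

lemma summable_nat_add_one_rpow_neg {q : ℝ} (hq : 1 < q) :
    Summable fun n : ℕ => ((n : ℝ) + 1) ^ (-q) := by
  exact_mod_cast (summable_nat_add_iff 1).mpr (Real.summable_nat_rpow.mpr (neg_lt_neg hq))

lemma mul_rpow_neg_add_one_le_sub {p a : ℝ} (hp : 0 ≤ p) (ha : 0 < a) :
    p * (a + 1) ^ (-(p + 1)) ≤ a ^ (-p) - (a + 1) ^ (-p) := by
  have ha1 : 0 < a + 1 := by linarith
  have hlog : 1 / (a + 1) ≤ log (a + 1) - log a := by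
    rw [← Real.log_div ha1.ne' ha.ne']
    convert Real.one_sub_inv_le_log_of_pos (div_pos ha1 ha) using 1
    field_simp
    ring
  have hexp : a ^ (-p) = (a + 1) ^ (-p) * exp (p * (log (a + 1) - log a)) := by
    rw [Real.rpow_def_of_pos ha, Real.rpow_def_of_pos ha1, ← Real.exp_add]
    ring_nf
  calc p * (a + 1) ^ (-(p + 1)) = (a + 1) ^ (-p) * (p * (1 / (a + 1))) := by
        rw [neg_add, Real.rpow_add ha1, Real.rpow_neg_one]
        ring
    _ ≤ (a + 1) ^ (-p) * (p * (log (a + 1) - log a)) := by gcongr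
    _ ≤ (a + 1) ^ (-p) * (exp (p * (log (a + 1) - log a)) - 1) := by
        gcongr
        linarith [Real.add_one_le_exp (p * (log (a + 1) - log a))]
    _ = a ^ (-p) - (a + 1) ^ (-p) := by rw [hexp]; ring

lemma tsum_nat_add_le_of_le_rpow_neg {p B : ℝ} (hp : 0 < p) {D : ℕ → ℝ}
    (hD0 : ∀ n, 0 ≤ D n)
    (hD : ∀ n, D n ≤ B * ((n : ℝ) + 1) ^ (-(p + 1))) {K : ℕ} (hK : 0 < K) :
    ∑' n, D (n + K) ≤ B / p * (K : ℝ) ^ (-p) := by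
  have hB : 0 ≤ B := by simpa using (hD0 0).trans (hD 0)
  have hK' : (0 : ℝ) < K := Nat.cast_pos.mpr hK
  set F : ℕ → ℝ := fun i => ((i : ℝ) + K) ^ (-p)
  have hstep : ∀ n, D (n + K) ≤ B / p * (F n - F (n + 1)) := by
    intro n
    have ha : 0 < (n : ℝ) + K := by positivity
    calc D (n + K) ≤ B * (((n : ℝ) + K) + 1) ^ (-(p + 1)) := by simpa using hD (n + K)
      _ = B / p * (p * (((n : ℝ) + K) + 1) ^ (-(p + 1))) := by field_simp
      _ ≤ B / p * (F n - F (n + 1)) := by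
          gcongr
          simpa [F, add_right_comm] using mul_rpow_neg_add_one_le_sub hp.le ha
  refine Real.tsum_le_of_sum_range_le (fun n => hD0 _) fun M => ?_
  calc ∑ i ∈ range M, D (i + K) ≤ ∑ i ∈ range M, B / p * (F i - F (i + 1)) :=
        sum_le_sum fun i _ => hstep i
    _ = B / p * (F 0 - F M) := by rw [← mul_sum, sum_range_sub']
    _ ≤ B / p * F 0 := by
        gcongr
        exact sub_le_self _ (by positivity)
    _ = B / p * (K : ℝ) ^ (-p) := by simp [F]

lemma exp_neg_half_le_mul_rpow_neg (p : ℝ) {L : ℝ} (hL : 1 ≤ L) :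
    exp (-(L / 2)) ≤ ⌈p⌉₊ ! * 2 ^ ⌈p⌉₊ * L ^ (-p) := by
  set m := ⌈p⌉₊
  have hL0 : 0 < L := by linarith
  calc exp (-(L / 2)) = (exp (L / 2))⁻¹ := Real.exp_neg _
    _ ≤ ((L / 2) ^ m / m !)⁻¹ :=
        inv_anti₀ (by positivity) (Real.pow_div_factorial_le_exp _ (by positivity) m)
    _ = m ! * 2 ^ m * L ^ (-(m : ℝ)) := by
        rw [Real.rpow_neg hL0.le, Real.rpow_natCast, div_pow]
        field_simp
    _ ≤ m ! * 2 ^ m * L ^ (-p) := by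
        gcongr
        exact Nat.le_ceil p

lemma tsum_le_mul_log_rpow_neg {p A B r₀ d : ℝ} (hp : 0 < p) (hA : 0 ≤ A) (hr₀ : 0 < r₀)
    (hd : 0 < d) (hL : 1 ≤ log (r₀ / d)) {D : ℕ → ℝ} (hD0 : ∀ n, 0 ≤ D n)
    (hhead : ∀ n, D n ≤ A * 2 ^ n * d)
    (htail : ∀ n, D n ≤ B * ((n : ℝ) + 1) ^ (-(p + 1))) :
    ∑' n, D n ≤
      (A * r₀ * exp 1 * (⌈p⌉₊ ! * 2 ^ ⌈p⌉₊) + B / p * 2 ^ p) * log (r₀ / d) ^ (-p) := by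
  set L := log (r₀ / d)
  have hL0 : 0 < L := by linarith
  have hB : 0 ≤ B := by simpa using (hD0 0).trans (htail 0)
  have hd_eq : d = r₀ * exp (-L) := by
    rw [Real.exp_neg, Real.exp_log (by positivity)]
    field_simp
  set K := ⌈L / 2⌉₊
  have hK : 0 < K := Nat.ceil_pos.mpr (by linarith)
  have hsum : Summable D := .of_nonneg_of_le hD0 htail
    ((summable_nat_add_one_rpow_neg (by linarith : 1 < p + 1)).mul_left B)
  have hhead_sum : ∑ n ∈ range K, D n ≤ A * r₀ * exp 1 * exp (-(L / 2)) := by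
    have hgeom : ∑ n ∈ range K, (2 : ℝ) ^ n ≤ 2 ^ K := by
      rw [geom_sum_eq (by norm_num)]
      norm_num
    have h2K : (2 : ℝ) ^ K ≤ exp (L / 2 + 1) :=
      calc (2 : ℝ) ^ K ≤ exp 1 ^ K := by
            gcongr
            linarith [Real.add_one_le_exp 1]
        _ = exp K := by rw [← Real.exp_nat_mul, mul_one]
        _ ≤ exp (L / 2 + 1) := by
            gcongr
            exact (Nat.ceil_lt_add_one (by linarith)).le
    calc ∑ n ∈ range K, D n ≤ ∑ n ∈ range K, A * d * 2 ^ n :=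
          sum_le_sum fun n _ => (hhead n).trans_eq (by ring)
      _ ≤ A * d * exp (L / 2 + 1) := by
          rw [← mul_sum]
          gcongr
          exact hgeom.trans h2K
      _ = A * r₀ * exp 1 * exp (-(L / 2)) := by
          rw [hd_eq, mul_assoc, mul_assoc, mul_assoc, ← Real.exp_add, ← Real.exp_add]
          ring_nf
  have htail_sum : ∑' n, D (n + K) ≤ B / p * 2 ^ p * L ^ (-p) :=
    calc ∑' n, D (n + K) ≤ B / p * (K : ℝ) ^ (-p) :=
          tsum_nat_add_le_of_le_rpow_neg hp hD0 htail hK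
      _ ≤ B / p * (L / 2) ^ (-p) := by
          exact mul_le_mul_of_nonneg_left
            (Real.rpow_le_rpow_of_nonpos (half_pos hL0) (Nat.le_ceil _) (neg_nonpos.mpr hp.le))
            (by positivity)
      _ = B / p * 2 ^ p * L ^ (-p) := by
          rw [Real.div_rpow hL0.le zero_le_two, Real.rpow_neg zero_le_two]
          field_simp
  calc ∑' n, D n = ∑ n ∈ range K, D n + ∑' n, D (n + K) :=
        (hsum.sum_add_tsum_nat_add K).symm
    _ ≤ A * r₀ * exp 1 * exp (-(L / 2)) + B / p * 2 ^ p * L ^ (-p) :=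
        add_le_add hhead_sum htail_sum
    _ ≤ A * r₀ * exp 1 * (⌈p⌉₊ ! * 2 ^ ⌈p⌉₊ * L ^ (-p)) + B / p * 2 ^ p * L ^ (-p) := by
        gcongr
        exact exp_neg_half_le_mul_rpow_neg p hL
    _ = _ := by ring

lemma dist_le_two_of_mem_sphere {E : Type*} [SeminormedAddCommGroup E]
    (u v : Metric.sphere (0 : E) 1) : dist u v ≤ 2 :=
  (dist_triangle_right (u : E) v 0).trans <| by
    rw [Metric.mem_sphere.mp u.2, Metric.mem_sphere.mp v.2]
    norm_num

section sphere

variable {H : Type*} [NormedAddCommGroup H] [InnerProductSpace ℝ H]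

lemma abs_inner_le_one_of_mem_sphere (u v : Metric.sphere (0 : H) 1) : |⟪(u : H), v⟫| ≤ 1 :=
  (abs_real_inner_le_norm _ _).trans (by simp)

lemma abs_inner_sub_inner_le_dist_add_dist (u v u' v' : Metric.sphere (0 : H) 1) :
    |⟪(u : H), v⟫ - ⟪(u' : H), v'⟫| ≤ dist u u' + dist v v' := by
  have hsplit :
      ⟪(u : H), v⟫ - ⟪(u' : H), v'⟫ = ⟪(u : H) - u', v⟫ + ⟪(u' : H), (v : H) - v'⟫ := by
    rw [inner_sub_left, inner_sub_right]
    ring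
  rw [hsplit, Subtype.dist_eq, Subtype.dist_eq, dist_eq_norm, dist_eq_norm]
  calc |⟪(u : H) - u', v⟫ + ⟪(u' : H), (v : H) - v'⟫|
      ≤ ‖(u : H) - u'‖ * ‖(v : H)‖ + ‖(u' : H)‖ * ‖(v : H) - v'‖ :=
        (abs_add_le _ _).trans
          (add_le_add (abs_real_inner_le_norm _ _) (abs_real_inner_le_norm _ _))
    _ = ‖(u : H) - u'‖ + ‖(v : H) - v'‖ := by simp

variable (δ : ℝ)

noncomputable def dysonTerm (x : ℕ → Metric.sphere (0 : H) 1) (n : ℕ) : ℝ :=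
  ⟪(x 0 : H), x (n + 1)⟫ / ((n : ℝ) + 1) ^ ((2 : ℝ) + δ)

noncomputable def dysonPotential (x : ℕ → Metric.sphere (0 : H) 1) : ℝ :=
  ∑' n, dysonTerm δ x n

lemma abs_dysonTerm (x : ℕ → Metric.sphere (0 : H) 1) (n : ℕ) :
    |dysonTerm δ x n| = |⟪(x 0 : H), x (n + 1)⟫| / ((n : ℝ) + 1) ^ ((2 : ℝ) + δ) := by
  rw [dysonTerm, abs_div, abs_of_pos (Real.rpow_pos_of_pos n.cast_add_one_pos _)]

lemma abs_dysonTerm_le (x : ℕ → Metric.sphere (0 : H) 1) (n : ℕ) :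
    |dysonTerm δ x n| ≤ ((n : ℝ) + 1) ^ (-(2 + δ)) := by
  rw [abs_dysonTerm, Real.rpow_neg n.cast_add_one_pos.le, ← one_div]
  gcongr
  exact abs_inner_le_one_of_mem_sphere _ _

variable {δ}

lemma abs_dysonTerm_sub_le (hδ : 0 ≤ δ) (x y : ℕ → Metric.sphere (0 : H) 1) (n : ℕ) :
    |dysonTerm δ x n - dysonTerm δ y n| ≤ 12 * 2 ^ n * seqDist x y := by
  have hden : 1 ≤ ((n : ℝ) + 1) ^ ((2 : ℝ) + δ) :=
    Real.one_le_rpow (by linarith [n.cast_nonneg (α := ℝ)]) (by linarith)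
  have h0 := dist_le_mul_two_pow_mul_seqDist x y one_le_two
    (dist_le_two_of_mem_sphere _ _) (n := 0)
  have h1 := dist_le_mul_two_pow_mul_seqDist x y one_le_two
    (dist_le_two_of_mem_sphere _ _) (n := n + 1)
  have hn : (1 : ℝ) ≤ 2 ^ n := one_le_pow₀ one_le_two
  have hd := seqDist_nonneg x y
  calc |dysonTerm δ x n - dysonTerm δ y n|
      = |⟪(x 0 : H), x (n + 1)⟫ - ⟪(y 0 : H), y (n + 1)⟫| / ((n : ℝ) + 1) ^ ((2 : ℝ) + δ) := by
        rw [dysonTerm, dysonTerm, div_sub_div_same, abs_div,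
          abs_of_pos (zero_lt_one.trans_le hden)]
    _ ≤ |⟪(x 0 : H), x (n + 1)⟫ - ⟪(y 0 : H), y (n + 1)⟫| := div_le_self (abs_nonneg _) hden
    _ ≤ dist (x 0) (y 0) + dist (x (n + 1)) (y (n + 1)) :=
        abs_inner_sub_inner_le_dist_add_dist _ _ _ _
    _ ≤ 12 * 2 ^ n * seqDist x y := by
        rw [pow_succ, pow_succ] at h1
        norm_num at h0
        nlinarith

lemma summable_abs_dysonTerm (hδ : 0 < δ) (x : ℕ → Metric.sphere (0 : H) 1) :
    Summable fun n => |dysonTerm δ x n| :=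
  .of_nonneg_of_le (fun _ => abs_nonneg _) (abs_dysonTerm_le δ x)
    (summable_nat_add_one_rpow_neg (by linarith))

lemma abs_dysonPotential_le (hδ : 0 < δ) (x : ℕ → Metric.sphere (0 : H) 1) :
    |dysonPotential δ x| ≤ ∑' n : ℕ, ((n : ℝ) + 1) ^ (-(2 + δ)) := by
  have hx := summable_abs_dysonTerm hδ x
  calc |dysonPotential δ x| ≤ ∑' n, |dysonTerm δ x n| := by
        rw [dysonPotential]
        simpa only [Real.norm_eq_abs] using
          norm_tsum_le_tsum_norm (f := dysonTerm δ x) (by simpa only [Real.norm_eq_abs] using hx)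
    _ ≤ _ := hx.tsum_le_tsum (abs_dysonTerm_le δ x) (summable_nat_add_one_rpow_neg (by linarith))

lemma continuous_dysonPotential (hδ : 0 < δ) :
    Continuous (dysonPotential δ : (ℕ → Metric.sphere (0 : H) 1) → ℝ) := by
  refine continuous_tsum (fun n => ?_) (summable_nat_add_one_rpow_neg (by linarith))
    fun n x => (Real.norm_eq_abs _).trans_le (abs_dysonTerm_le δ x n)
  exact ((continuous_subtype_val.comp (continuous_apply 0)).inner
    (continuous_subtype_val.comp (continuous_apply (n + 1)))).div_const _

lemma exists_abs_dysonPotential_sub_le (hδ : 0 < δ) {ε r₀ : ℝ} (hε : ε ≤ 1 + δ)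
    (hr₀ : exp 1 < r₀) :
    ∃ C > 0, ∀ x y : ℕ → Metric.sphere (0 : H) 1, x ≠ y →
      |dysonPotential δ x - dysonPotential δ y| ≤ C * log (r₀ / seqDist x y) ^ (-ε) := by
  have hr₀0 : 0 < r₀ := (exp_pos 1).trans hr₀
  refine ⟨12 * r₀ * exp 1 * (⌈1 + δ⌉₊ ! * 2 ^ ⌈1 + δ⌉₊) + 2 / (1 + δ) * 2 ^ (1 + δ),
    by positivity, fun x y hxy => ?_⟩
  have hd : 0 < seqDist x y := seqDist_pos hxy
  have hL : 1 ≤ log (r₀ / seqDist x y) := by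
    rw [Real.le_log_iff_exp_le (by positivity)]
    exact hr₀.le.trans (le_div_self hr₀0.le hd (seqDist_le_one x y))
  have hx := summable_abs_dysonTerm hδ x
  have hy := summable_abs_dysonTerm hδ y
  have htail (n : ℕ) :
      |dysonTerm δ x n - dysonTerm δ y n| ≤ 2 * ((n : ℝ) + 1) ^ (-(1 + δ + 1)) := by
    rw [show -(1 + δ + 1) = -(2 + δ) by ring]
    linarith [abs_sub (dysonTerm δ x n) (dysonTerm δ y n), abs_dysonTerm_le δ x n,
      abs_dysonTerm_le δ y n]
  calc |dysonPotential δ x - dysonPotential δ y|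
      = ‖∑' n, (dysonTerm δ x n - dysonTerm δ y n)‖ := by
        rw [dysonPotential, dysonPotential, hx.of_abs.tsum_sub hy.of_abs, Real.norm_eq_abs]
    _ ≤ ∑' n, |dysonTerm δ x n - dysonTerm δ y n| :=
        norm_tsum_le_tsum_norm <| (hx.add hy).of_nonneg_of_le (fun _ => abs_nonneg _)
          fun n => abs_sub _ _
    _ ≤ _ * log (r₀ / seqDist x y) ^ (-(1 + δ)) :=
        tsum_le_mul_log_rpow_neg (by linarith) (by norm_num) hr₀0 hd hL (fun _ => abs_nonneg _)
          (abs_dysonTerm_sub_le hδ.le x y) htail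
    _ ≤ _ := by gcongr

end sphere

theorem stmt_12_general
    (N : ℕ) (δ : ℝ) (hδ : 0 < δ)
    (f : (ℕ → Metric.sphere (0 : EuclideanSpace ℝ (Fin (N + 1))) 1) → ℝ)
    (hf : ∀ x, f x = ∑' n : ℕ,
      ⟪((x 0 : EuclideanSpace ℝ (Fin (N + 1)))), ((x (n + 1) : EuclideanSpace ℝ (Fin (N + 1))))⟫
        / ((n : ℝ) + 1) ^ ((2 : ℝ) + δ)) :
    (∀ x : ℕ → Metric.sphere (0 : EuclideanSpace ℝ (Fin (N + 1))) 1, Summable fun n : ℕ =>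
      |⟪((x 0 : EuclideanSpace ℝ (Fin (N + 1)))), ((x (n + 1) : EuclideanSpace ℝ (Fin (N + 1))))⟫|
        / ((n : ℝ) + 1) ^ ((2 : ℝ) + δ)) ∧
    (∃ M, ∀ x, |f x| ≤ M) ∧
    Continuous f ∧
    (∀ ε : ℝ, 0 < ε → ε ≤ 1 + δ → ∀ r0 : ℝ, Real.exp 1 < r0 →
      ∃ C > (0 : ℝ), ∀ x y, x ≠ y →
        |f x - f y| ≤ C * (Real.log (r0 / seqDist x y)) ^ (-ε)) := by
  obtain rfl : f = dysonPotential δ := funext hf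
  exact ⟨fun x => (summable_abs_dysonTerm hδ x).congr (abs_dysonTerm δ x),
    ⟨_, abs_dysonPotential_le hδ⟩, continuous_dysonPotential hδ,
    fun ε _ hε r0 hr0 => exists_abs_dysonPotential_sub_le hδ hε hr0⟩

/-- The Dyson-type potential of the long-range `O(N)` model is well defined,
bounded, continuous and belongs to every generalized Hölder space
`C^{ε log}` with `0 < ε ≤ 1 + δ`. -/
theorem stmt_12
    (N : ℕ) (hN : 1 ≤ N) (δ : ℝ) (hδ : 0 < δ)
    (f : (ℕ → Metric.sphere (0 : EuclideanSpace ℝ (Fin (N + 1))) 1) → ℝ)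
    (hf : ∀ x, f x = ∑' n : ℕ,
      ⟪((x 0 : EuclideanSpace ℝ (Fin (N + 1)))), ((x (n + 1) : EuclideanSpace ℝ (Fin (N + 1))))⟫
        / ((n : ℝ) + 1) ^ ((2 : ℝ) + δ)) :
    (∀ x : ℕ → Metric.sphere (0 : EuclideanSpace ℝ (Fin (N + 1))) 1, Summable fun n : ℕ =>
      |⟪((x 0 : EuclideanSpace ℝ (Fin (N + 1)))), ((x (n + 1) : EuclideanSpace ℝ (Fin (N + 1))))⟫|
        / ((n : ℝ) + 1) ^ ((2 : ℝ) + δ)) ∧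
    (∃ M, ∀ x, |f x| ≤ M) ∧
    Continuous f ∧
    (∀ ε : ℝ, 0 < ε → ε ≤ 1 + δ → ∀ r0 : ℝ, Real.exp 1 < r0 →
      ∃ C > (0 : ℝ), ∀ x y, x ≠ y →
        |f x - f y| ≤ C * (Real.log (r0 / seqDist x y)) ^ (-ε)) :=
  stmt_12_general N δ hδ f hf
end

section
/- Let (X, d) be a complete separable metric space with finite diameter, (m_x)_{x∈X} a Markov transition probability kernel on X, ω a modulus of continuity, and f : X → ℝ a bounded ω-Hölder function. For n ≥ 1 let m^n_x denote the law on X^n of the first n steps of the chain with kernel (m_x) started at x, and f^n(x̄) = f(x_1) + ⋯ + f(x_n) for x̄ = (x_1,…,x_n). Assume f is flat with respect to some coupling: there is a family of probability measures Π^n_{x,y} on X^n × X^n, measurable in (x,y), whose two marginals are m^n_x and m^n_y, and a constant C > 0 such that for all n, x, y and Π^n_{x,y}-almost every (x̄, ȳ), |f^n(x̄) − f^n(ȳ)| ≤ C ω(d(x,y)). Let L φ(x) = ∫_X e^{f(y)} φ(y) dm_x(y). Then: (i) for all n and all x, y ∈ X, L^n 1(x) ≤ e^{C ω(diam X)} L^n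 1(y); (ii) the quantity ϱ = limsup_{n→∞} (L^n 1(x))^{1/n} is finite, strictly positive, and independent of x; (iii) there exist constants A, B > 0 such that A ϱ^n ≤ L^n 1(x) ≤ B ϱ^n for all n ≥ 1 and all x ∈ X. -/
/-!
Write `Zₙ(x) = ∫ exp (f x₁ + ⋯ + f xₙ) dmⁿₓ`, so that `Lⁿ1 = Zₙ`. Integrating against the two
marginals of the coupling `Πⁿ_{x,y}` and using flatness gives `Zₙ(x) ≤ K Zₙ(y)` with
`K = exp (C ω(diam X))`, which is (i). By the Markov property
`Z_{n+q}(x) = ∫ exp (fⁿ) Z_q(xₙ) dmⁿₓ`, and (i) compares `Z_q(xₙ)` with `Z_q(x)`; hence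
`aₙ = Zₙ(x₀)` is almost multiplicative: `a_p a_q ≤ K a_{p+q}` and `a_{p+q} ≤ K a_p a_q`.
Fekete's lemma, applied to the subadditive sequences `log (K aₙ)` and `log (K / aₙ)`, whose sum
is constant, yields `ϱ` with `ϱⁿ ≤ K aₙ ≤ K² ϱⁿ`. Together with (i) this is (iii) with
`A = K⁻²`, `B = K²`, and (iii) forces `Lⁿ1(x)^{1/n} → ϱ`, which is (ii).
-/

open MeasureTheory Filter Topology
open scoped ENNReal

/-- The law on `Xⁿ` of the first `n` steps of the Markov chain with kernel `m`
started at `x`. -/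
noncomputable def pathLaw {X : Type*} [MeasurableSpace X] (m : X → Measure X) :
    (n : ℕ) → X → Measure (Fin n → X)
  | 0, _ => Measure.dirac (fun i => i.elim0)
  | n + 1, x => (m x).bind fun y => (pathLaw m n y).map (Fin.cons y)

lemma Subadditive.bddBelow_div_of_add_eq {u w : ℕ → ℝ} (hu : Subadditive u) (hw : Subadditive w)
    {c : ℝ} (huw : ∀ n, u n + w n = c) : BddBelow (Set.range fun n => u n / n) := by
  refine ⟨min 0 (-w 1), ?_⟩
  rintro _ ⟨n, rfl⟩
  rcases Nat.eq_zero_or_pos n with rfl | hn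
  · simp
  have hu0 : 0 ≤ u 0 := by linarith [hu 0 0]
  have hwn : w n ≤ n * w 1 + w 0 := by simpa using hw.apply_mul_add_le n 1 0
  have hn' : (0 : ℝ) < n := by exact_mod_cast hn
  refine min_le_of_right_le ((le_div_iff₀ hn').2 ?_)
  linarith [huw n, huw 0]

theorem exists_pow_bounds_of_almost_mul {a : ℕ → ℝ} {K : ℝ} (hK : 0 < K) (ha : ∀ n, 0 < a n)
    (hle : ∀ p q, a (p + q) ≤ K * a p * a q) (hge : ∀ p q, a p * a q ≤ K * a (p + q)) :
    ∃ ρ > 0, ∀ n, n ≠ 0 → ρ ^ n ≤ K * a n ∧ a n ≤ K * ρ ^ n := by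
  set u : ℕ → ℝ := fun n => Real.log (K * a n)
  set w : ℕ → ℝ := fun n => Real.log (K / a n)
  have hu : Subadditive u := fun p q => by
    rw [← Real.log_mul (mul_pos hK (ha p)).ne' (mul_pos hK (ha q)).ne']
    refine Real.log_le_log (mul_pos hK (ha _)) ?_
    nlinarith [hle p q]
  have hw : Subadditive w := fun p q => by
    rw [← Real.log_mul (div_pos hK (ha p)).ne' (div_pos hK (ha q)).ne']
    refine Real.log_le_log (div_pos hK (ha _)) ?_
    rw [div_mul_div_comm, div_le_div_iff₀ (ha _) (mul_pos (ha p) (ha q))]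
    nlinarith [hge p q]
  have huw : ∀ n, u n + w n = Real.log (K * K) := fun n => by
    rw [← Real.log_mul (mul_pos hK (ha n)).ne' (div_pos hK (ha n)).ne']
    congr 1
    field_simp [(ha n).ne']
  have hbu := hu.bddBelow_div_of_add_eq hw huw
  have hbw := hw.bddBelow_div_of_add_eq hu fun n => (add_comm _ _).trans (huw n)
  have hwlim : hw.lim = -hu.lim := by
    refine tendsto_nhds_unique (hw.tendsto_lim hbw) ?_
    have := (tendsto_const_div_atTop_nhds_zero_nat (Real.log (K * K))).sub (hu.tendsto_lim hbu)
    rw [zero_sub] at this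
    refine this.congr fun n => ?_
    rw [← huw n, add_div, add_sub_cancel_left]
  refine ⟨Real.exp hu.lim, Real.exp_pos _, fun n hn => ⟨?_, ?_⟩⟩
  · have hn' : (0 : ℝ) < n := by exact_mod_cast Nat.pos_of_ne_zero hn
    have := (le_div_iff₀ hn').1 (hu.lim_le_div hbu hn)
    rw [← Real.exp_nat_mul, ← Real.exp_log (mul_pos hK (ha n))]
    exact Real.exp_le_exp.2 (by linarith)
  · have hn' : (0 : ℝ) < n := by exact_mod_cast Nat.pos_of_ne_zero hn
    have := (le_div_iff₀ hn').1 (hwlim ▸ hw.lim_le_div hbw hn)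
    have hexp : Real.exp (-(n * hu.lim)) ≤ K / a n := by
      rw [← Real.exp_log (div_pos hK (ha n))]
      exact Real.exp_le_exp.2 (by linarith)
    rw [Real.exp_neg, inv_le_comm₀ (Real.exp_pos _) (div_pos hK (ha n)), inv_div,
      div_le_iff₀ hK] at hexp
    rw [← Real.exp_nat_mul]
    linarith

theorem tendsto_ofReal_rpow_one_div_of_pow_bounds {b : ℕ → ℝ} {A B ρ : ℝ} (hA : 0 < A)
    (hB : 0 < B) (hρ : 0 ≤ ρ) (hb : ∀ n, n ≠ 0 → A * ρ ^ n ≤ b n ∧ b n ≤ B * ρ ^ n) :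
    Tendsto (fun n : ℕ => ENNReal.ofReal (b n) ^ ((1 : ℝ) / n)) atTop (𝓝 (ENNReal.ofReal ρ)) := by
  have hroot {D : ℝ} (hD : 0 < D) :
      Tendsto (fun n : ℕ => (D * ρ ^ n) ^ ((1 : ℝ) / n)) atTop (𝓝 ρ) := by
    have hlim : Tendsto (fun n : ℕ => D ^ ((1 : ℝ) / n) * ρ) atTop (𝓝 ρ) := by
      have := (tendsto_const_nhds (x := D)).rpow
        (tendsto_const_div_atTop_nhds_zero_nat (1 : ℝ)) (Or.inl hD.ne')
      simpa using this.mul_const ρ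
    refine hlim.congr' ((eventually_ne_atTop 0).mono fun n hn => ?_)
    dsimp only
    rw [Real.mul_rpow hD.le (pow_nonneg hρ n), one_div, Real.pow_rpow_inv_natCast hρ hn]
  have hb0 (n : ℕ) (hn : n ≠ 0) : 0 ≤ b n :=
    (mul_nonneg hA.le (pow_nonneg hρ n)).trans (hb n hn).1
  have hreal : Tendsto (fun n : ℕ => b n ^ ((1 : ℝ) / n)) atTop (𝓝 ρ) := by
    refine tendsto_of_tendsto_of_tendsto_of_le_of_le' (hroot hA) (hroot hB) ?_ ?_ <;>
      filter_upwards [eventually_ne_atTop 0] with n hn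
    · exact Real.rpow_le_rpow (mul_nonneg hA.le (pow_nonneg hρ n)) (hb n hn).1 (by positivity)
    · exact Real.rpow_le_rpow (hb0 n hn) (hb n hn).2 (by positivity)
  refine ((ENNReal.continuous_ofReal.tendsto ρ).comp hreal).congr' ?_
  filter_upwards [eventually_ne_atTop 0] with n hn
  exact (ENNReal.ofReal_rpow_of_nonneg (hb0 n hn) (by positivity)).symm

lemma continuous_of_abs_sub_le_mul_modulus {Y : Type*} [PseudoMetricSpace Y] {g : Y → ℝ}
    {ω : ℝ → ℝ} {c : ℝ} (hωc : ContinuousWithinAt ω (Set.Ici 0) 0) (hω0 : ω 0 = 0)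
    (hg : ∀ x y, |g x - g y| ≤ c * ω (dist x y)) : Continuous g := by
  refine continuous_iff_continuousAt.2 fun x => tendsto_iff_dist_tendsto_zero.2 ?_
  have hdist : Tendsto (fun y => dist y x) (𝓝 x) (𝓝[Set.Ici 0] 0) :=
    tendsto_nhdsWithin_iff.2
      ⟨by simpa using (continuous_id.dist (continuous_const (y := x))).tendsto x,
        .of_forall fun _ => dist_nonneg⟩
  have hlim := (hωc.tendsto.comp hdist).const_mul c
  rw [hω0, mul_zero] at hlim
  exact squeeze_zero (fun _ => dist_nonneg) (fun y => (Real.dist_eq _ _).trans_le (hg y x)) hlim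

section PathLaw

open ProbabilityTheory

variable {X : Type*} [MeasurableSpace X]

lemma measurable_finCons (n : ℕ) :
    Measurable fun q : X × (Fin n → X) => (Fin.cons q.1 q.2 : Fin (n + 1) → X) := by
  refine measurable_pi_iff.2 fun i => Fin.cases ?_ (fun j => ?_) i
  · simpa using measurable_fst
  · exact (measurable_pi_apply j).comp measurable_snd

lemma measurable_finCons_left {n : ℕ} (y : X) :
    Measurable (Fin.cons (α := fun _ => X) y : (Fin n → X) → Fin (n + 1) → X) :=
  (measurable_finCons n).comp measurable_prodMk_left

lemma measurable_map_finCons {n : ℕ} (κ : Kernel X (Fin n → X)) [IsSFiniteKernel κ] :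
    Measurable fun y => (κ y).map (Fin.cons (α := fun _ => X) y) := by
  refine Measure.measurable_of_measurable_coe _ fun s hs => ?_
  simp_rw [Measure.map_apply (measurable_finCons_left _) hs]
  exact Kernel.measurable_kernel_prodMk_left (measurable_finCons n hs)

variable {κ : Kernel X X}

variable (κ) in
/-- `Lⁿ1(x)` as a lower integral, which needs no integrability. -/
noncomputable def partitionFn (f : X → ℝ) (n : ℕ) (x : X) : ℝ≥0∞ :=
  ∫⁻ p, ENNReal.ofReal (Real.exp (∑ i, f (p i))) ∂pathLaw κ n x

variable {f : X → ℝ}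

lemma measurable_ofReal_exp_birkhoffSum (hf : Measurable f) (n : ℕ) :
    Measurable fun p : Fin n → X => ENNReal.ofReal (Real.exp (∑ i, f (p i))) := by
  fun_prop

lemma partitionFn_zero (x : X) : partitionFn κ f 0 x = 1 := by
  simp [partitionFn, pathLaw]

lemma partitionFn_le_mul_of_coupling (hf : Measurable f) {n : ℕ} {x y : X}
    {π : Measure ((Fin n → X) × (Fin n → X))} (h₁ : π.map Prod.fst = pathLaw κ n x)
    (h₂ : π.map Prod.snd = pathLaw κ n y) {c : ℝ}
    (hflat : ∀ᵐ q ∂π, |(∑ i, f (q.1 i)) - ∑ i, f (q.2 i)| ≤ c) :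
    partitionFn κ f n x ≤ ENNReal.ofReal (Real.exp c) * partitionFn κ f n y := by
  have hE := measurable_ofReal_exp_birkhoffSum hf n
  rw [partitionFn, partitionFn, ← h₁, ← h₂, lintegral_map hE measurable_fst,
    lintegral_map hE measurable_snd, ← lintegral_const_mul' _ _ ENNReal.ofReal_ne_top]
  refine lintegral_mono_ae (hflat.mono fun q hq => ?_)
  rw [← ENNReal.ofReal_mul (Real.exp_pos _).le, ← Real.exp_add]
  exact ENNReal.ofReal_le_ofReal (Real.exp_le_exp.2 (by linarith [(abs_le.1 hq).2]))

variable [IsMarkovKernel κ]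

lemma measurable_pathLaw_and_isProbabilityMeasure (n : ℕ) :
    Measurable (pathLaw κ n) ∧ ∀ x, IsProbabilityMeasure (pathLaw κ n x) := by
  induction n with
  | zero => exact ⟨measurable_const, fun _ => Measure.dirac.isProbabilityMeasure⟩
  | succ n ih =>
    have : IsMarkovKernel ⟨pathLaw κ n, ih.1⟩ := ⟨ih.2⟩
    have hmap : Measurable fun y => (pathLaw κ n y).map (Fin.cons (α := fun _ => X) y) :=
      measurable_map_finCons ⟨pathLaw κ n, ih.1⟩
    refine ⟨(Measure.measurable_bind' hmap).comp κ.measurable, fun x => ⟨?_⟩⟩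
    have : ∀ y, IsProbabilityMeasure (pathLaw κ n y) := ih.2
    rw [pathLaw, Measure.bind_apply MeasurableSet.univ hmap.aemeasurable]
    simp [Measure.map_apply (measurable_finCons_left _)]

lemma measurable_pathLaw (n : ℕ) : Measurable (pathLaw κ n) :=
  (measurable_pathLaw_and_isProbabilityMeasure n).1

instance isProbabilityMeasure_pathLaw (n : ℕ) (x : X) : IsProbabilityMeasure (pathLaw κ n x) :=
  (measurable_pathLaw_and_isProbabilityMeasure n).2 x

lemma lintegral_pathLaw_succ {n : ℕ} {F : (Fin (n + 1) → X) → ℝ≥0∞} (hF : Measurable F)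
    (x : X) :
    ∫⁻ p, F p ∂pathLaw κ (n + 1) x = ∫⁻ y, ∫⁻ p, F (Fin.cons y p) ∂pathLaw κ n y ∂κ x := by
  have : IsMarkovKernel ⟨pathLaw κ n, measurable_pathLaw n⟩ :=
    ⟨isProbabilityMeasure_pathLaw n⟩
  have hmap : Measurable fun y => (pathLaw κ n y).map (Fin.cons (α := fun _ => X) y) :=
    measurable_map_finCons ⟨pathLaw κ n, measurable_pathLaw n⟩
  rw [pathLaw, Measure.lintegral_bind hmap.aemeasurable hF.aemeasurable]
  refine lintegral_congr fun y => ?_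
  exact lintegral_map hF (measurable_finCons_left _)

lemma partitionFn_succ (hf : Measurable f) (n : ℕ) (x : X) :
    partitionFn κ f (n + 1) x =
      ∫⁻ y, ENNReal.ofReal (Real.exp (f y)) * partitionFn κ f n y ∂κ x := by
  rw [partitionFn, lintegral_pathLaw_succ (measurable_ofReal_exp_birkhoffSum hf _)]
  refine lintegral_congr fun y => ?_
  simp only [Fin.sum_univ_succ, Fin.cons_zero, Fin.cons_succ, Real.exp_add,
    ENNReal.ofReal_mul (Real.exp_pos _).le]
  exact lintegral_const_mul' _ _ ENNReal.ofReal_ne_top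

lemma measurable_partitionFn (hf : Measurable f) (n : ℕ) : Measurable (partitionFn κ f n) :=
  (Measure.measurable_lintegral (measurable_ofReal_exp_birkhoffSum hf n)).comp
    (measurable_pathLaw n)

lemma measurable_ofReal_exp_mul_partitionFn (hf : Measurable f) (n : ℕ) :
    Measurable fun y => ENNReal.ofReal (Real.exp (f y)) * partitionFn κ f n y :=
  (ENNReal.measurable_ofReal.comp (Real.measurable_exp.comp hf)).mul
    (measurable_partitionFn hf n)

lemma partitionFn_mem_Icc {M : ℝ} (hM : ∀ x, |f x| ≤ M) (n : ℕ) (x : X) :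
    partitionFn κ f n x ∈ Set.Icc (ENNReal.ofReal (Real.exp (-(n * M))))
      (ENNReal.ofReal (Real.exp (n * M))) := by
  have hsum (p : Fin n → X) : |∑ i, f (p i)| ≤ n * M := calc
    _ ≤ ∑ i, |f (p i)| := Finset.abs_sum_le_sum_abs _ _
    _ ≤ ∑ _i : Fin n, M := Finset.sum_le_sum fun i _ => hM (p i)
    _ = n * M := by simp
  constructor
  · calc ENNReal.ofReal (Real.exp (-(n * M)))
        = ∫⁻ _p, ENNReal.ofReal (Real.exp (-(n * M))) ∂pathLaw κ n x := by simp
      _ ≤ partitionFn κ f n x := lintegral_mono fun p =>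
        ENNReal.ofReal_le_ofReal (Real.exp_le_exp.2 (abs_le.1 (hsum p)).1)
  · calc partitionFn κ f n x ≤ ∫⁻ _p, ENNReal.ofReal (Real.exp (n * M)) ∂pathLaw κ n x :=
          lintegral_mono fun p =>
            ENNReal.ofReal_le_ofReal (Real.exp_le_exp.2 (abs_le.1 (hsum p)).2)
      _ = ENNReal.ofReal (Real.exp (n * M)) := by simp

lemma partitionFn_ne_top {M : ℝ} (hM : ∀ x, |f x| ≤ M) (n : ℕ) (x : X) : partitionFn κ f n x ≠ ⊤ :=
  ((partitionFn_mem_Icc hM n x).2.trans_lt ENNReal.ofReal_lt_top).ne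

lemma partitionFn_pos {M : ℝ} (hM : ∀ x, |f x| ≤ M) (n : ℕ) (x : X) : 0 < partitionFn κ f n x :=
  (ENNReal.ofReal_pos.2 (Real.exp_pos _)).trans_le (partitionFn_mem_Icc hM n x).1

lemma iterate_transfer_one_eq (hf : Measurable f) {M : ℝ} (hM : ∀ x, |f x| ≤ M)
    {L : (X → ℝ) → X → ℝ} (hL : ∀ φ x, L φ x = ∫ y, Real.exp (f y) * φ y ∂κ x) (n : ℕ) (x : X) :
    L^[n] (fun _ => 1) x = (partitionFn κ f n x).toReal := by
  induction n generalizing x with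
  | zero => simp [partitionFn_zero]
  | succ n ih =>
    rw [Function.iterate_succ_apply', hL, partitionFn_succ hf,
      ← integral_toReal (f := fun y => ENNReal.ofReal (Real.exp (f y)) * partitionFn κ f n y)
        (measurable_ofReal_exp_mul_partitionFn hf n).aemeasurable
        (Eventually.of_forall fun y =>
          ENNReal.mul_lt_top ENNReal.ofReal_lt_top (partitionFn_ne_top hM n y).lt_top)]
    simp [ih, ENNReal.toReal_mul, (Real.exp_pos _).le]

lemma partitionFn_add_le (hf : Measurable f) {q : ℕ} {c d : ℝ≥0∞}
    (h : ∀ y, c * partitionFn κ f q y ≤ d) (n : ℕ) (x : X) :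
    c * partitionFn κ f (n + q) x ≤ d * partitionFn κ f n x := by
  induction n generalizing x with
  | zero => simpa [partitionFn_zero] using h x
  | succ n ih =>
    rw [Nat.add_right_comm, partitionFn_succ hf, partitionFn_succ hf,
      ← lintegral_const_mul _ (measurable_ofReal_exp_mul_partitionFn hf _),
      ← lintegral_const_mul _ (measurable_ofReal_exp_mul_partitionFn hf _)]
    refine lintegral_mono fun y => ?_
    rw [mul_left_comm c, mul_left_comm d]
    exact mul_le_mul_right (ih y) _

lemma le_partitionFn_add (hf : Measurable f) {q : ℕ} {c d : ℝ≥0∞}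
    (h : ∀ y, d ≤ c * partitionFn κ f q y) (n : ℕ) (x : X) :
    d * partitionFn κ f n x ≤ c * partitionFn κ f (n + q) x := by
  induction n generalizing x with
  | zero => simpa [partitionFn_zero] using h x
  | succ n ih =>
    rw [Nat.add_right_comm, partitionFn_succ hf, partitionFn_succ hf,
      ← lintegral_const_mul _ (measurable_ofReal_exp_mul_partitionFn hf _),
      ← lintegral_const_mul _ (measurable_ofReal_exp_mul_partitionFn hf _)]
    refine lintegral_mono fun y => ?_
    rw [mul_left_comm c, mul_left_comm d]
    exact mul_le_mul_right (ih y) _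

lemma partitionFn_almost_mul (hf : Measurable f) {K : ℝ≥0∞}
    (hcomp : ∀ n x y, partitionFn κ f n x ≤ K * partitionFn κ f n y) (p q : ℕ) (x : X) :
    partitionFn κ f (p + q) x ≤ K * partitionFn κ f q x * partitionFn κ f p x ∧
      partitionFn κ f q x * partitionFn κ f p x ≤ K * partitionFn κ f (p + q) x :=
  ⟨by simpa using partitionFn_add_le hf (c := 1) (fun y => by simpa using hcomp q y x) p x,
    le_partitionFn_add hf (fun y => hcomp q x y) p x⟩

lemma toReal_partitionFn_le {M : ℝ} (hM : ∀ x, |f x| ≤ M) {K : ℝ} (hK : 0 ≤ K)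
    (hcomp : ∀ n x y, partitionFn κ f n x ≤ ENNReal.ofReal K * partitionFn κ f n y)
    (n : ℕ) (x y : X) : (partitionFn κ f n x).toReal ≤ K * (partitionFn κ f n y).toReal := by
  simpa [ENNReal.toReal_mul, hK] using ENNReal.toReal_mono
    (ENNReal.mul_ne_top ENNReal.ofReal_ne_top (partitionFn_ne_top hM n y)) (hcomp n x y)

theorem exists_pow_bounds_partitionFn (hf : Measurable f) {M : ℝ} (hM : ∀ x, |f x| ≤ M)
    {K : ℝ} (hK : 0 < K)
    (hcomp : ∀ n x y, partitionFn κ f n x ≤ ENNReal.ofReal K * partitionFn κ f n y) (x₀ : X) :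
    ∃ ρ > 0, ∀ n, n ≠ 0 → ∀ x, (K ^ 2)⁻¹ * ρ ^ n ≤ (partitionFn κ f n x).toReal ∧
      (partitionFn κ f n x).toReal ≤ K ^ 2 * ρ ^ n := by
  set a : ℕ → ℝ := fun n => (partitionFn κ f n x₀).toReal
  have ha (n : ℕ) : 0 < a n :=
    ENNReal.toReal_pos (partitionFn_pos hM n x₀).ne' (partitionFn_ne_top hM n x₀)
  have hcompR := toReal_partitionFn_le hM hK.le hcomp
  have hmul := partitionFn_almost_mul hf hcomp
  have hZ := partitionFn_ne_top (κ := κ) hM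
  obtain ⟨ρ, hρ, hρa⟩ := exists_pow_bounds_of_almost_mul hK ha
    (fun p q => by
      simpa [a, ENNReal.toReal_mul, hK.le, mul_right_comm] using
        ENNReal.toReal_mono
          (ENNReal.mul_ne_top (ENNReal.mul_ne_top ENNReal.ofReal_ne_top (hZ q x₀)) (hZ p x₀))
          (hmul p q x₀).1)
    (fun p q => by
      simpa [a, ENNReal.toReal_mul, hK.le, mul_comm] using
        ENNReal.toReal_mono (ENNReal.mul_ne_top ENNReal.ofReal_ne_top (hZ (p + q) x₀))
          (hmul p q x₀).2)
  refine ⟨ρ, hρ, fun n hn x => ⟨?_, ?_⟩⟩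
  · rw [inv_mul_le_iff₀ (by positivity)]
    nlinarith [(hρa n hn).1, hcompR n x₀ x]
  · nlinarith [(hρa n hn).2, hcompR n x x₀, ha n]

end PathLaw

theorem stmt_17_general
    {X : Type*} [MetricSpace X]
    [MeasurableSpace X] [BorelSpace X]
    (hdiam : EMetric.diam (Set.univ : Set X) ≠ ⊤)
    (m : X → Measure X) (hmp : ∀ x, IsProbabilityMeasure (m x))
    (hmm : ∀ A : Set X, MeasurableSet A → Measurable fun x => m x A)
    (ω : ℝ → ℝ) (hωc : ContinuousOn ω (Set.Ici 0)) (hωm : MonotoneOn ω (Set.Ici 0))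
    (hω0 : ω 0 = 0)
    (f : X → ℝ) (hfb : ∃ M, ∀ x, |f x| ≤ M)
    (hfH : ∃ Cf : ℝ, ∀ x y, |f x - f y| ≤ Cf * ω (dist x y))
    (Pl : (n : ℕ) → X → X → Measure ((Fin n → X) × (Fin n → X)))
    (hmarg1 : ∀ n x y, (Pl n x y).map Prod.fst = pathLaw m n x)
    (hmarg2 : ∀ n x y, (Pl n x y).map Prod.snd = pathLaw m n y)
    (C : ℝ) (hC : 0 < C)
    (hflat : ∀ n x y, ∀ᵐ q ∂ (Pl n x y),
      |(∑ i, f (q.1 i)) - ∑ i, f (q.2 i)| ≤ C * ω (dist x y))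
    (L : (X → ℝ) → (X → ℝ))
    (hL : ∀ φ x, L φ x = ∫ y, Real.exp (f y) * φ y ∂ m x) :
    (∀ n : ℕ, ∀ x y : X,
      L^[n] (fun _ => 1) x
        ≤ Real.exp (C * ω (Metric.diam (Set.univ : Set X))) * L^[n] (fun _ => 1) y) ∧
    ∃ ϱ : ℝ≥0∞, 0 < ϱ ∧ ϱ ≠ ⊤ ∧
      (∀ x, Filter.limsup
        (fun n : ℕ => (ENNReal.ofReal (L^[n] (fun _ => 1) x)) ^ ((1 : ℝ) / (n : ℝ)))
        atTop = ϱ) ∧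
      ∃ A B : ℝ, 0 < A ∧ 0 < B ∧ ∀ n : ℕ, 1 ≤ n → ∀ x,
        A * ϱ.toReal ^ n ≤ L^[n] (fun _ => 1) x ∧
        L^[n] (fun _ => 1) x ≤ B * ϱ.toReal ^ n := by
  rcases isEmpty_or_nonempty X with hX | ⟨⟨x₀⟩⟩
  · exact ⟨fun _ x => isEmptyElim x, 1, one_pos, ENNReal.one_ne_top, fun x => isEmptyElim x,
      1, 1, one_pos, one_pos, fun _ _ x => isEmptyElim x⟩
  obtain ⟨M, hM⟩ := hfb
  obtain ⟨Cf, hCf⟩ := hfH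
  have hf : Measurable f :=
    (continuous_of_abs_sub_le_mul_modulus (hωc 0 Set.self_mem_Ici) hω0 hCf).measurable
  let κ : ProbabilityTheory.Kernel X X := ⟨m, Measure.measurable_of_measurable_coe m hmm⟩
  have : ProbabilityTheory.IsMarkovKernel κ := ⟨hmp⟩
  have hL1 := iterate_transfer_one_eq (κ := κ) hf hM hL
  set K := Real.exp (C * ω (Metric.diam (Set.univ : Set X)))
  have hcomp (n : ℕ) (x y : X) : partitionFn κ f n x ≤ ENNReal.ofReal K * partitionFn κ f n y :=
    partitionFn_le_mul_of_coupling hf (hmarg1 n x y) (hmarg2 n x y) <|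
      (hflat n x y).mono fun q hq => hq.trans <| mul_le_mul_of_nonneg_left
        (hωm dist_nonneg Metric.diam_nonneg (Metric.dist_le_diam_of_mem' hdiam trivial trivial))
        hC.le
  obtain ⟨ρ, hρ, hbounds⟩ :=
    exists_pow_bounds_partitionFn hf hM (Real.exp_pos _) hcomp x₀
  simp_rw [hL1]
  refine ⟨toReal_partitionFn_le hM (Real.exp_pos _).le hcomp, ENNReal.ofReal ρ,
    ENNReal.ofReal_pos.2 hρ, ENNReal.ofReal_ne_top, fun x => ?_, (K ^ 2)⁻¹, K ^ 2,
    by positivity, by positivity, ?_⟩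
  · exact (tendsto_ofReal_rpow_one_div_of_pow_bounds (by positivity) (by positivity) hρ.le
      fun n hn => hbounds n hn x).limsup_eq
  · simpa only [ENNReal.toReal_ofReal hρ.le] using fun n hn => hbounds n (by omega)

/-- Uniform comparison, finiteness of the spectral radius and uniform
two-sided bounds `A ϱⁿ ≤ Lⁿ1 ≤ B ϱⁿ` for the transfer operator of a flat
potential on a space of finite diameter. -/
theorem stmt_17
    {X : Type*} [MetricSpace X] [CompleteSpace X]
    [TopologicalSpace.SeparableSpace X]
    [MeasurableSpace X] [BorelSpace X]
    (hdiam : EMetric.diam (Set.univ : Set X) ≠ ⊤)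
    (m : X → Measure X) (hmp : ∀ x, IsProbabilityMeasure (m x))
    (hmm : ∀ A : Set X, MeasurableSet A → Measurable fun x => m x A)
    (ω : ℝ → ℝ) (hωc : ContinuousOn ω (Set.Ici 0)) (hωm : MonotoneOn ω (Set.Ici 0))
    (hωconc : ConcaveOn ℝ (Set.Ici 0) ω) (hω0 : ω 0 = 0)
    (f : X → ℝ) (hfb : ∃ M, ∀ x, |f x| ≤ M)
    (hfH : ∃ Cf : ℝ, ∀ x y, |f x - f y| ≤ Cf * ω (dist x y))
    (Pl : (n : ℕ) → X → X → Measure ((Fin n → X) × (Fin n → X)))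
    (hPlp : ∀ n x y, IsProbabilityMeasure (Pl n x y))
    (hPlmeas : ∀ n : ℕ, ∀ A : Set ((Fin n → X) × (Fin n → X)), MeasurableSet A →
      Measurable fun q : X × X => Pl n q.1 q.2 A)
    (hmarg1 : ∀ n x y, (Pl n x y).map Prod.fst = pathLaw m n x)
    (hmarg2 : ∀ n x y, (Pl n x y).map Prod.snd = pathLaw m n y)
    (C : ℝ) (hC : 0 < C)
    (hflat : ∀ n x y, ∀ᵐ q ∂ (Pl n x y),
      |(∑ i, f (q.1 i)) - ∑ i, f (q.2 i)| ≤ C * ω (dist x y))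
    (L : (X → ℝ) → (X → ℝ))
    (hL : ∀ φ x, L φ x = ∫ y, Real.exp (f y) * φ y ∂ m x) :
    (∀ n : ℕ, ∀ x y : X,
      L^[n] (fun _ => 1) x
        ≤ Real.exp (C * ω (Metric.diam (Set.univ : Set X))) * L^[n] (fun _ => 1) y) ∧
    ∃ ϱ : ℝ≥0∞, 0 < ϱ ∧ ϱ ≠ ⊤ ∧
      (∀ x, Filter.limsup
        (fun n : ℕ => (ENNReal.ofReal (L^[n] (fun _ => 1) x)) ^ ((1 : ℝ) / (n : ℝ)))
        atTop = ϱ) ∧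
      ∃ A B : ℝ, 0 < A ∧ 0 < B ∧ ∀ n : ℕ, 1 ≤ n → ∀ x,
        A * ϱ.toReal ^ n ≤ L^[n] (fun _ => 1) x ∧
        L^[n] (fun _ => 1) x ≤ B * ϱ.toReal ^ n :=
  stmt_17_general hdiam m hmp hmm ω hωc hωm hω0 f hfb hfH Pl hmarg1 hmarg2 C hC hflat L hL
end
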